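/- arXiv:1610.03692 — 7 statements merged into one kernel-verified Lean document; each statement's English description precedes it below -/
import Mathlib

section
/- Let q ∈ (0,1) be real and let m1, k be natural numbers. Then ∑_{s=0}^{min(m1,k)} q^{(m1−s)(k−s)} / ( (m1−s)_q (k−s)_q (s)_q ) = 1 / ( (m1)_q (k)_q ). (Equivalently, the q-hypergeometric distribution qHyp(m1,∞,k) is a probability distribution.) -/
open Finset

/-- `(x; q)_k` : the finite q-Pochhammer symbol `∏_{i=0}^{k-1} (1 - x qⁱ)`. -/
noncomputable def qPoch (q x : ℝ) (k : ℕ) : ℝ := ∏ i ∈ Finset.range k, (1 - x * q ^ i)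

/-- `(x; q)_∞` : the infinite q-Pochhammer symbol `∏_{i=0}^{∞} (1 - x qⁱ)`. -/
noncomputable def qPochInf (q x : ℝ) : ℝ := ∏' i : ℕ, (1 - x * q ^ i)

/-- `(n)_q := (q; q)_n = ∏_{i=1}^{n} (1 - qⁱ)`. -/
noncomputable def qFac (q : ℝ) (n : ℕ) : ℝ := qPoch q q n

/-- The q-binomial coefficient `binom(n,k)_q = (n)_q / ((k)_q (n-k)_q)`. -/
noncomputable def qBinom (q : ℝ) (n k : ℕ) : ℝ := qFac q n / (qFac q k * qFac q (n - k))

lemma qFac_zero (q : ℝ) : qFac q 0 = 1 := by simp [qFac, qPoch]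

lemma qFac_succ (q : ℝ) (n : ℕ) : qFac q (n+1) = qFac q n * (1 - q^(n+1)) := by
  simp only [qFac, qPoch, Finset.prod_range_succ]
  ring

lemma qFac_pos {q : ℝ} (hq0 : 0 < q) (hq1 : q < 1) (n : ℕ) : 0 < qFac q n := by
  unfold qFac qPoch
  apply Finset.prod_pos
  intro i _
  have : q * q ^ i < 1 := by
    calc q * q ^ i ≤ q * 1 := by
          apply mul_le_mul_of_nonneg_left _ hq0.le
          exact pow_le_one₀ hq0.le hq1.le
      _ < 1 := by linarith
  linarith

lemma one_sub_q_pow_pos {q : ℝ} (hq0 : 0 < q) (hq1 : q < 1) (n : ℕ) :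
    0 < 1 - q ^ (n+1) := by
  have : q ^ (n+1) < 1 := pow_lt_one₀ hq0.le hq1 (Nat.succ_ne_zero n)
  linarith

/-- The summand of the q-hypergeometric identity. -/
noncomputable def qT (q : ℝ) (m k s : ℕ) : ℝ :=
  q ^ ((m-s)*(k-s)) / (qFac q (m-s) * qFac q (k-s) * qFac q s)

section key
variable {q : ℝ} (hq0 : 0 < q) (hq1 : q < 1)

include hq0 hq1

lemma h3lem (m k : ℕ) :
    (1 - q^(m+1)) * qT q (m+1) k 0 = q^(k-0) * qT q m k 0 := by
  simp only [qT, Nat.sub_zero, qFac_zero, qFac_succ]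
  have hfm := (qFac_pos hq0 hq1 m).ne'
  have hfk := (qFac_pos hq0 hq1 k).ne'
  have h1m := (one_sub_q_pow_pos hq0 hq1 m).ne'
  field_simp
  ring

lemma h2lem (m k : ℕ) (hk : m + 1 ≤ k) :
    (1 - q^(m+1)) * qT q (m+1) k (m+1) = (1 - q^(k-m)) * qT q m k m := by
  obtain ⟨c, rfl⟩ : ∃ c, k = m + 1 + c := ⟨k - (m+1), by omega⟩
  have e1 : m + 1 + c - (m + 1) = c := by omega
  have e2 : m + 1 + c - m = c + 1 := by omega
  have e3 : m + 1 - (m + 1) = 0 := by omega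
  have e4 : m - m = 0 := by omega
  simp only [qT, e1, e2, e3, e4, qFac_zero, qFac_succ]
  have hfm := (qFac_pos hq0 hq1 m).ne'
  have hfc := (qFac_pos hq0 hq1 c).ne'
  have h1m := (one_sub_q_pow_pos hq0 hq1 m).ne'
  have h1c := (one_sub_q_pow_pos hq0 hq1 c).ne'
  field_simp
  ring

lemma h1lem (m k j : ℕ) (hj : j < m) (hk : m + 1 ≤ k) :
    (1 - q^(m+1)) * qT q (m+1) k (j+1)
      = q^(k-(j+1)) * qT q m k (j+1) + (1 - q^(k-j)) * qT q m k j := by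
  obtain ⟨a, rfl⟩ : ∃ a, m = j + 1 + a := ⟨m - (j+1), by omega⟩
  obtain ⟨c, rfl⟩ : ∃ c, k = j + a + 2 + c := ⟨k - (j+1+a+1), by omega⟩
  have e1 : j + 1 + a + 1 - (j + 1) = a + 1 := by omega
  have e2 : j + a + 2 + c - (j + 1) = a + c + 1 := by omega
  have e3 : j + 1 + a - (j + 1) = a := by omega
  have e4 : j + 1 + a - j = a + 1 := by omega
  have e5 : j + a + 2 + c - j = a + c + 2 := by omega
  simp only [qT, e1, e2, e3, e4, e5]
  have hA : qFac q (a+1) = qFac q a * (1 - q^(a+1)) := qFac_succ q a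
  have hC : qFac q (a+c+2) = qFac q (a+c+1) * (1 - q^(a+c+2)) := qFac_succ q (a+c+1)
  have hJ : qFac q (j+1) = qFac q j * (1 - q^(j+1)) := qFac_succ q j
  rw [hA, hC, hJ]
  have hfa := (qFac_pos hq0 hq1 a).ne'
  have hfac := (qFac_pos hq0 hq1 (a+c+1)).ne'
  have hfj := (qFac_pos hq0 hq1 j).ne'
  have n1 := (one_sub_q_pow_pos hq0 hq1 a).ne'
  have n2 := (one_sub_q_pow_pos hq0 hq1 (a+c+1)).ne'
  have n3 := (one_sub_q_pow_pos hq0 hq1 j).ne'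
  have e6 : j + 1 + a + 1 = j + a + 2 := by omega
  have e7 : a + c + 1 + 1 = a + c + 2 := by omega
  rw [e6, e7] at *
  field_simp
  ring

lemma key : ∀ m k, m ≤ k → ∑ s ∈ range (m+1), qT q m k s = 1 / (qFac q m * qFac q k) := by
  intro m
  induction m with
  | zero =>
    intro k _
    simp [qT, qFac_zero]
  | succ m IH =>
    intro k hk
    have hfm := (qFac_pos hq0 hq1 m).ne'
    have hfk := (qFac_pos hq0 hq1 k).ne'
    have h1m := (one_sub_q_pow_pos hq0 hq1 m).ne'
    have key2 : (1 - q^(m+1)) * ∑ s ∈ range (m+1+1), qT q (m+1) k s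
        = ∑ s ∈ range (m+1), qT q m k s := by
      rw [Finset.mul_sum]
      rw [Finset.sum_range_succ' (fun s => (1 - q^(m+1)) * qT q (m+1) k s) (m+1)]
      rw [Finset.sum_range_succ (fun j => (1 - q^(m+1)) * qT q (m+1) k (j+1)) m]
      have hs : ∑ j ∈ range m, (1 - q^(m+1)) * qT q (m+1) k (j+1)
          = ∑ j ∈ range m, (q^(k-(j+1)) * qT q m k (j+1) + (1 - q^(k-j)) * qT q m k j) := by
        refine Finset.sum_congr rfl fun j hj => ?_
        exact h1lem hq0 hq1 m k j (mem_range.mp hj) hk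
      rw [hs, Finset.sum_add_distrib, h2lem hq0 hq1 m k hk, h3lem hq0 hq1 m k]
      have split : ∑ s ∈ range (m+1), qT q m k s
          = (∑ j ∈ range m, q^(k-(j+1)) * qT q m k (j+1) + q^(k-0) * qT q m k 0)
            + (∑ j ∈ range m, (1 - q^(k-j)) * qT q m k j + (1 - q^(k-m)) * qT q m k m) := by
        rw [← Finset.sum_range_succ' (fun s => q^(k-s) * qT q m k s) m,
            ← Finset.sum_range_succ (fun j => (1 - q^(k-j)) * qT q m k j) m,
            ← Finset.sum_add_distrib]
        refine Finset.sum_congr rfl fun s _ => ?_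
        ring
      rw [split]
      ring
    have hIH := IH k (by omega)
    rw [hIH] at key2
    rw [qFac_succ]
    have hS : ∑ s ∈ range (m+1+1), qT q (m+1) k s
        = 1 / (qFac q m * qFac q k) / (1 - q^(m+1)) := by
      field_simp at key2 ⊢
      linarith [key2]
    rw [hS]
    field_simp

end key

/-- For `q ∈ (0,1)` and naturals `m1, k`,
`∑_{s=0}^{min(m1,k)} q^{(m1-s)(k-s)} / ((m1-s)_q (k-s)_q (s)_q) = 1 / ((m1)_q (k)_q)`.
Equivalently, the q-hypergeometric distribution `qHyp(m1,∞,k)` is a probability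
distribution. -/
theorem qhyp_inf_identity (q : ℝ) (hq : q ∈ Set.Ioo (0 : ℝ) 1) (m1 k : ℕ) :
    ∑ s ∈ Finset.Icc 0 (min m1 k),
      q ^ ((m1 - s) * (k - s)) / (qFac q (m1 - s) * qFac q (k - s) * qFac q s)
      = 1 / (qFac q m1 * qFac q k) := by
  obtain ⟨hq0, hq1⟩ := hq
  have hIcc : ∀ n : ℕ, Finset.Icc 0 n = Finset.range (n+1) := by
    intro n; ext x; simp [Nat.lt_succ_iff]
  rcases le_total m1 k with h | h
  · rw [min_eq_left h, hIcc]
    exact key hq0 hq1 m1 k h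
  · rw [min_eq_right h, hIcc]
    have := key hq0 hq1 k m1 h
    rw [show (1:ℝ) / (qFac q m1 * qFac q k) = 1 / (qFac q k * qFac q m1) by ring, ← this]
    refine Finset.sum_congr rfl fun s _ => ?_
    simp only [qT]
    rw [mul_comm (k - s) (m1 - s), mul_comm (qFac q (k-s)) (qFac q (m1-s))]
end

section
/- Let q ∈ (0,1) be real and let l, u, v, p be natural numbers with l ≤ u ≤ p and l ≤ v ≤ p. Then for every natural number s with max(0, u+v−l−p) ≤ s ≤ min(u−l, v−l), the pmf of qHyp(u−l, p−u, v−l) at s satisfies f_{qHyp(u−l, p−u, v−l)}(s) = q^{(u−l−s)(v−l−s)} · (u−l)_q (p−u)_q (v−l)_q (p−v)_q / ( (s)_q (u−l−s)_q (v−l−s)_q (l+p−u−v+s)_q (p−l)_q ). In particular f_{qHyp(u−l, p−u, v−l)}(s) = f_{qHyp(v−l, p−v, u−l)}(s), i.e. the pmf is symmetric under exchanging u and v. (This is the symmetry of the local growth rule used to prove the symmetry of qRSK.) -/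
open Finset

lemma qFac_ne_zero {q : ℝ} (hq0 : 0 < q) (hq1 : q < 1) (n : ℕ) : qFac q n ≠ 0 :=
  (qFac_pos hq0 hq1 n).ne'

lemma key_s6 {q : ℝ} (hq0 : 0 < q) (hq1 : q < 1) (m1 m2 k s : ℕ)
    (h1 : s ≤ m1) (h2 : s ≤ k) (h3 : k - s ≤ m2) (h4 : k ≤ m1 + m2) :
    qBinom q m1 s * qBinom q m2 (k - s) / qBinom q (m1 + m2) k
      = (qFac q m1 * qFac q m2 * qFac q k * qFac q (m1 + m2 - k)) /
        (qFac q s * qFac q (m1 - s) * qFac q (k - s) * qFac q (m2 - (k - s)) *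
          qFac q (m1 + m2)) := by
  unfold qBinom
  have ne : ∀ n : ℕ, qFac q n ≠ 0 := qFac_ne_zero hq0 hq1
  field_simp

/-- **Symmetry of the local growth rule of qRSK.** For `q ∈ (0,1)` and naturals
`l ≤ u ≤ p`, `l ≤ v ≤ p`, and `s` with `max(0, u+v-l-p) ≤ s ≤ min(u-l, v-l)`, the pmf of
`qHyp(u-l, p-u, v-l)` at `s` equals the explicit expression
`q^{(u-l-s)(v-l-s)} (u-l)_q (p-u)_q (v-l)_q (p-v)_q
 / ((s)_q (u-l-s)_q (v-l-s)_q (l+p-u-v+s)_q (p-l)_q)`,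
which is symmetric under exchanging `u` and `v`; in particular
`f_{qHyp(u-l,p-u,v-l)}(s) = f_{qHyp(v-l,p-v,u-l)}(s)`. -/
theorem qhyp_local_rule_symmetric (q : ℝ) (hq : q ∈ Set.Ioo (0 : ℝ) 1)
    (l u v p : ℕ) (hlu : l ≤ u) (hup : u ≤ p) (hlv : l ≤ v) (hvp : v ≤ p)
    (s : ℕ) (hs1 : u + v - l - p ≤ s) (hs2 : s ≤ min (u - l) (v - l)) :
    (q ^ ((u - l - s) * (v - l - s)) * qBinom q (u - l) s * qBinom q (p - u) (v - l - s) /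
        qBinom q ((u - l) + (p - u)) (v - l)
      = q ^ ((u - l - s) * (v - l - s)) *
          (qFac q (u - l) * qFac q (p - u) * qFac q (v - l) * qFac q (p - v)) /
          (qFac q s * qFac q (u - l - s) * qFac q (v - l - s) *
            qFac q (l + p + s - u - v) * qFac q (p - l))) ∧
    (q ^ ((u - l - s) * (v - l - s)) * qBinom q (u - l) s * qBinom q (p - u) (v - l - s) /
        qBinom q ((u - l) + (p - u)) (v - l)
      = q ^ ((v - l - s) * (u - l - s)) * qBinom q (v - l) s * qBinom q (p - v) (u - l - s) /
        qBinom q ((v - l) + (p - v)) (u - l)) := by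

  obtain ⟨hq0, hq1⟩ := hq
  have hsu : s ≤ u - l := le_trans hs2 (min_le_left _ _)
  have hsv : s ≤ v - l := le_trans hs2 (min_le_right _ _)
  have h3 : v - l - s ≤ p - u := by omega
  have h4 : v - l ≤ (u - l) + (p - u) := by omega
  have h3' : u - l - s ≤ p - v := by omega
  have h4' : u - l ≤ (v - l) + (p - v) := by omega
  have e1 : (u - l) + (p - u) - (v - l) = p - v := by omega
  have e2 : p - u - (v - l - s) = l + p + s - u - v := by omega
  have e1' : (v - l) + (p - v) - (u - l) = p - u := by omega
  have e2' : p - v - (u - l - s) = l + p + s - u - v := by omega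
  have e3 : (u - l) + (p - u) = p - l := by omega
  have e3' : (v - l) + (p - v) = p - l := by omega
  have k1 := key_s6 hq0 hq1 (u - l) (p - u) (v - l) s hsu hsv h3 h4
  have k2 := key_s6 hq0 hq1 (v - l) (p - v) (u - l) s hsv hsu h3' h4'
  rw [e1, e2, e3] at k1
  rw [e1', e2', e3'] at k2
  constructor
  · rw [e3, mul_assoc, mul_div_assoc, k1]
    ring
  · rw [e3, e3']
    conv_lhs => rw [mul_assoc, mul_div_assoc, k1]
    conv_rhs => rw [mul_assoc, mul_div_assoc, k2]
    ring
end

section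
/- (Deterministic interlacing preservation of the q-deformed insertion.) Let j ≥ 1, and let μ = (μ_1 ≥ ⋯ ≥ μ_{j−1}), λ = (λ_1 ≥ ⋯ ≥ λ_j), μ̃ = (μ̃_1 ≥ ⋯ ≥ μ̃_{j−1}) be nonincreasing tuples of natural numbers such that μ ≺ λ (i.e. λ_{k+1} ≤ μ_k ≤ λ_k for k = 1,…,j−1) and μ ≺ μ̃ (i.e. μ̃_{k+1} ≤ μ_k ≤ μ̃_k for k = 1,…,j−2, and μ_k ≤ μ̃_k for all k). Let a_1 ∈ ℕ, and for each k = 1,…,j−1 let a_{k+1} be an integer satisfying max(0, λ_k − μ_k − μ_{k−1} + μ̃_k) ≤ a_{k+1} ≤ min(μ̃_k − μ_k, λ_k − μ_k), with the convention that for k = 1 the term involving μ_0 = ∞ imposes no constraint (so the lower bound is 0). Define λ̃_k := a_k + λ_k + μ̃_k − μ_k − a_{k+1} for k = 1,…,j−1 and λ̃_j := λ_j + a_j. Then λ̃_{k+1} ≤ λ_k ≤ λ̃_k for k = 1,…,j−1 and λ_j ≤ λ̃_j (i.e. λ ≺ λ̃), and λ̃_{k+1} ≤ μ̃_k ≤ λ̃_k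 for k = 1,…,j−1 (i.e. μ̃ ≺ λ̃). -/
/-- **Deterministic interlacing preservation of the q-deformed (Noumi–Yamada) insertion.**
Given nonincreasing tuples `μ` (length `j-1`), `λ` (length `j`), `μ̃` (length `j-1`) of
naturals with `μ ≺ λ` and `μ ≺ μ̃`, and integers `a_1 ≥ 0` and `a_{k+1}` lying in the
support of `qHyp(μ̃_k - μ_k, μ_{k-1} - μ̃_k, λ_k - μ_k)` (with `μ_0 = ∞`), the new row
`λ̃_k := a_k + λ_k + μ̃_k - μ_k - a_{k+1}` (`k < j`), `λ̃_j := λ_j + a_j`, satisfies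
`λ ≺ λ̃` and `μ̃ ≺ λ̃`. -/
theorem qrsk_insertion_interlacing (j : ℕ) (hj : 1 ≤ j)
    (lam mu muT : ℕ → ℕ) (a : ℕ → ℤ) (lamt : ℕ → ℤ)
    (hlam_mono : ∀ k, 1 ≤ k → k + 1 ≤ j → lam (k + 1) ≤ lam k)
    (hmu_mono : ∀ k, 1 ≤ k → k + 1 ≤ j - 1 → mu (k + 1) ≤ mu k)
    (hmut_mono : ∀ k, 1 ≤ k → k + 1 ≤ j - 1 → muT (k + 1) ≤ muT k)
    (hint1 : ∀ k, 1 ≤ k → k ≤ j - 1 → lam (k + 1) ≤ mu k ∧ mu k ≤ lam k)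
    (hint2 : ∀ k, 1 ≤ k → k ≤ j - 2 → muT (k + 1) ≤ mu k)
    (hint3 : ∀ k, 1 ≤ k → k ≤ j - 1 → mu k ≤ muT k)
    (ha1 : 0 ≤ a 1)
    (hbounds : ∀ k, 1 ≤ k → k ≤ j - 1 →
      0 ≤ a (k + 1) ∧ a (k + 1) ≤ (muT k : ℤ) - mu k ∧ a (k + 1) ≤ (lam k : ℤ) - mu k ∧
        (2 ≤ k → (lam k : ℤ) - mu k - mu (k - 1) + muT k ≤ a (k + 1)))
    (hlamt : ∀ k, 1 ≤ k → k ≤ j - 1 →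
      lamt k = a k + (lam k : ℤ) + (muT k : ℤ) - (mu k : ℤ) - a (k + 1))
    (hlamtj : lamt j = (lam j : ℤ) + a j) :
    (∀ k, 1 ≤ k → k ≤ j - 1 → lamt (k + 1) ≤ (lam k : ℤ) ∧ (lam k : ℤ) ≤ lamt k) ∧
    ((lam j : ℤ) ≤ lamt j) ∧
    (∀ k, 1 ≤ k → k ≤ j - 1 → lamt (k + 1) ≤ (muT k : ℤ) ∧ (muT k : ℤ) ≤ lamt k) := by
  -- a_k ≥ 0 for all 1 ≤ k ≤ j
  have ha_nonneg : ∀ k, 1 ≤ k → k ≤ j → 0 ≤ a k := by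
    intro k hk1 hkj
    rcases Nat.lt_or_ge k 2 with hk2 | hk2
    · have : k = 1 := by omega
      rw [this]; exact ha1
    · obtain ⟨m, rfl⟩ : ∃ m, k = m + 1 := ⟨k - 1, by omega⟩
      exact (hbounds m (by omega) (by omega)).1
  -- upper bound: lamt (k+1) ≤ a (k+1) + mu k  for 1 ≤ k, k+1 ≤ j-1
  have hkey : ∀ k, 1 ≤ k → k + 1 ≤ j - 1 → lamt (k + 1) ≤ a (k + 1) + (mu k : ℤ) := by
    intro k hk1 hk
    have hb := (hbounds (k + 1) (by omega) (by omega)).2.2.2 (by omega)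
    simp only [Nat.add_sub_cancel] at hb
    have he := hlamt (k + 1) (by omega) (by omega)
    omega
  -- lamt k ≥ lam k and lamt k ≥ muT k for 1 ≤ k ≤ j-1
  have hup : ∀ k, 1 ≤ k → k ≤ j - 1 → (lam k : ℤ) ≤ lamt k ∧ (muT k : ℤ) ≤ lamt k := by
    intro k hk1 hk
    have he := hlamt k hk1 hk
    have hb := hbounds k hk1 hk
    have hak := ha_nonneg k hk1 (by omega)
    omega
  -- lamt (k+1) ≤ lam k and ≤ muT k
  have hdown : ∀ k, 1 ≤ k → k ≤ j - 1 → lamt (k + 1) ≤ (lam k : ℤ) ∧ lamt (k + 1) ≤ (muT k : ℤ) := by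
    intro k hk1 hk
    have hb := hbounds k hk1 hk
    rcases Nat.lt_or_ge (k + 1) j with hlt | hge
    · -- k + 1 ≤ j - 1
      have hkk := hkey k hk1 (by omega)
      have h1 := (hint1 k hk1 hk).2
      have h3 := hint3 k hk1 hk
      omega
    · -- k + 1 = j
      have hkj : k + 1 = j := by omega
      rw [hkj, hlamtj]
      have h1 := (hint1 k hk1 hk).1
      have hkj' : lam (k + 1) = lam j := by rw [hkj]
      have haj : a j = a (k + 1) := by rw [hkj]
      have h3 := hint3 k hk1 hk
      omega
  refine ⟨fun k hk1 hk => ⟨(hdown k hk1 hk).1, (hup k hk1 hk).1⟩, ?_, fun k hk1 hk => ⟨(hdown k hk1 hk).2, (hup k hk1 hk).2⟩⟩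
  rw [hlamtj]
  rcases Nat.lt_or_ge j 2 with h | h
  · have hj1 : j = 1 := by omega
    subst hj1
    have := ha1
    omega
  · have := ha_nonneg j (by omega) le_rfl
    omega
end

section
/- (Weight preservation of the Noumi–Yamada recursion.) Let m ≥ 1 and let (w_{i,k})_{i≥1, 1≤k≤m} be natural numbers. Suppose integers λ^k_j(n) (for 1 ≤ j ≤ k ≤ m, n ≥ 0) and a^k_j(n) (for 1 ≤ j ≤ k ≤ m, n ≥ 1) satisfy: λ^k_j(0) = 0 for all j,k; a^k_1(n) = w_{n,k} for all n,k; λ^k_k(n) = λ^k_k(n−1) + a^k_k(n) for all n,k; and λ^k_j(n) = a^k_j(n) + λ^k_j(n−1) + λ^{k−1}_j(n) − λ^{k−1}_j(n−1) − a^k_{j+1}(n) for all n ≥ 1 and 1 ≤ j < k ≤ m. Then for all n ≥ 0 and 1 ≤ k ≤ m: ∑_{j=1}^{k} λ^k_j(n) = ∑_{i=1}^{n} ∑_{j=1}^{k} w_{i,j}. -/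
private lemma ny_tele (f : ℕ → ℤ) : ∀ k : ℕ,
    ∑ j ∈ Finset.Icc 1 k, (f j - f (j + 1)) = f 1 - f (k + 1) := by
  intro k
  induction k with
  | zero => simp
  | succ k ih =>
    rw [Finset.sum_Icc_succ_top (by omega : 1 ≤ k + 1), ih]
    ring

/-- **Weight preservation of the Noumi–Yamada recursion.**  If the triangular array
`lam k j n` (level `k`, edge `j`, time `n`) satisfies the Noumi–Yamada description of the
q-deformed RSK insertion of the rows `w 1 ·, …, w n ·` — with empty initial condition,
`a k 1 n = w n k`, the boundary rule `lam k k n = lam k k (n-1) + a k k n`, and the bulk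
rule `lam k j n = a k j n + lam k j (n-1) + lam (k-1) j n - lam (k-1) j (n-1) - a k (j+1) n`
for arbitrary integers `a k (j+1) n` — then for all `n ≥ 0` and `1 ≤ k ≤ m`,
`∑_{j=1}^{k} lam k j n = ∑_{i=1}^{n} ∑_{j=1}^{k} w i j`. -/
theorem noumi_yamada_weight_preservation (m : ℕ) (hm : 1 ≤ m) (w : ℕ → ℕ → ℕ)
    (lam : ℕ → ℕ → ℕ → ℤ) (a : ℕ → ℕ → ℕ → ℤ)
    (h0 : ∀ k j, 1 ≤ j → j ≤ k → k ≤ m → lam k j 0 = 0)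
    (ha1 : ∀ n k, 1 ≤ n → 1 ≤ k → k ≤ m → a k 1 n = (w n k : ℤ))
    (hdiag : ∀ n k, 1 ≤ n → 1 ≤ k → k ≤ m → lam k k n = lam k k (n - 1) + a k k n)
    (hrec : ∀ n k j, 1 ≤ n → 1 ≤ j → j < k → k ≤ m →
      lam k j n = a k j n + lam k j (n - 1) + lam (k - 1) j n - lam (k - 1) j (n - 1)
        - a k (j + 1) n) :
    ∀ n k, 1 ≤ k → k ≤ m →
      ∑ j ∈ Finset.Icc 1 k, lam k j n = ∑ i ∈ Finset.Icc 1 n, ∑ j ∈ Finset.Icc 1 k, (w i j : ℤ) := by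
  intro n
  induction n with
  | zero =>
    intro k hk1 hkm
    simp only [Finset.Icc_eq_empty (by omega : ¬ (1:ℕ) ≤ 0), Finset.sum_empty]
    exact Finset.sum_eq_zero fun j hj =>
      h0 k j (Finset.mem_Icc.mp hj).1 (Finset.mem_Icc.mp hj).2 hkm
  | succ n ih =>
    -- key one-step increment, by induction on k
    have key : ∀ k, 1 ≤ k → k ≤ m →
        ∑ j ∈ Finset.Icc 1 k, lam k j (n + 1)
          = ∑ j ∈ Finset.Icc 1 k, lam k j n + ∑ j ∈ Finset.Icc 1 k, (w (n + 1) j : ℤ) := by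
      intro k hk1
      induction k, hk1 using Nat.le_induction with
      | base =>
        intro h1m
        simp only [Finset.Icc_self, Finset.sum_singleton]
        have hd := hdiag (n + 1) 1 (by omega) le_rfl h1m
        have ha := ha1 (n + 1) 1 (by omega) le_rfl h1m
        simp only [Nat.add_sub_cancel] at hd
        rw [hd, ha]
      | succ k hk ihk =>
        intro hkm
        have ihk' := ihk (by omega)
        have hsplit : ∑ j ∈ Finset.Icc 1 (k + 1), lam (k + 1) j (n + 1)
            = (∑ j ∈ Finset.Icc 1 k, lam (k + 1) j (n + 1)) + lam (k + 1) (k + 1) (n + 1) :=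
          Finset.sum_Icc_succ_top (by omega) _
        have hmid : ∑ j ∈ Finset.Icc 1 k, lam (k + 1) j (n + 1)
            = ∑ j ∈ Finset.Icc 1 k,
                ((a (k + 1) j (n + 1) - a (k + 1) (j + 1) (n + 1))
                  + lam (k + 1) j n + lam k j (n + 1) - lam k j n) := by
          refine Finset.sum_congr rfl fun j hj => ?_
          obtain ⟨hj1, hj2⟩ := Finset.mem_Icc.mp hj
          have h := hrec (n + 1) (k + 1) j (by omega) hj1 (by omega) hkm
          simp only [Nat.add_sub_cancel] at h
          linarith
        have hdexp : lam (k + 1) (k + 1) (n + 1)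
            = lam (k + 1) (k + 1) n + a (k + 1) (k + 1) (n + 1) := by
          have h := hdiag (n + 1) (k + 1) (by omega) (by omega) hkm
          simpa using h
        have htel := ny_tele (fun j => a (k + 1) j (n + 1)) k
        have ha := ha1 (n + 1) (k + 1) (by omega) (by omega) hkm
        have hsum : ∑ j ∈ Finset.Icc 1 k,
                ((a (k + 1) j (n + 1) - a (k + 1) (j + 1) (n + 1))
                  + lam (k + 1) j n + lam k j (n + 1) - lam k j n)
            = (a (k + 1) 1 (n + 1) - a (k + 1) (k + 1) (n + 1))
              + ∑ j ∈ Finset.Icc 1 k, lam (k + 1) j n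
              + ∑ j ∈ Finset.Icc 1 k, lam k j (n + 1)
              - ∑ j ∈ Finset.Icc 1 k, lam k j n := by
          rw [Finset.sum_sub_distrib] at htel
          simp only [Finset.sum_add_distrib, Finset.sum_sub_distrib]
          linarith [htel]
        have hRL : ∑ j ∈ Finset.Icc 1 (k + 1), lam (k + 1) j n
            = (∑ j ∈ Finset.Icc 1 k, lam (k + 1) j n) + lam (k + 1) (k + 1) n :=
          Finset.sum_Icc_succ_top (by omega) _
        have hRW : ∑ j ∈ Finset.Icc 1 (k + 1), (w (n + 1) j : ℤ)
            = (∑ j ∈ Finset.Icc 1 k, (w (n + 1) j : ℤ)) + (w (n + 1) (k + 1) : ℤ) :=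
          Finset.sum_Icc_succ_top (by omega) _
        rw [hsplit, hmid, hsum, hdexp, hRL, hRW]
        linarith [ihk']
    intro k hk1 hkm
    rw [Finset.sum_Icc_succ_top (by omega : 1 ≤ n + 1), key k hk1 hkm, ih k hk1 hkm]
end

section
/- (The insertion does not propagate to the k-th edge before time k.) Let m ≥ 1 and let (w_{n,j})_{n≥1, 1≤j≤m} be natural numbers. Suppose natural numbers λ^j_k(n) (for 1 ≤ k ≤ j ≤ m, n ≥ 0) and a^j_k(n) satisfy: λ^j_k(0) = 0 for all k ≤ j; a^j_1(n) = w_{n,j}; λ^j_j(n) = λ^j_j(n−1) + a^j_j(n); for 1 ≤ k < j, λ^j_k(n) = a^j_k(n) + λ^j_k(n−1) + λ^{j−1}_k(n) − λ^{j−1}_k(n−1) − a^j_{k+1}(n), where a^j_{k+1}(n) is an integer satisfying max(0, λ^j_k(n−1) − λ^{j−1}_k(n−1) − λ^{j−1}_{k−1}(n−1) + λ^{j−1}_k(n)) ≤ a^j_{k+1}(n) ≤ min(λ^{j−1}_k(n) − λ^{j−1}_k(n−1), λ^j_k(n−1) − λ^{j−1}_k(n−1)), with the convention that for k = 1 the term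 involving λ^{j−1}_0 = ∞ imposes no constraint (so the lower bound is 0). Then λ^j_k(n) = 0 whenever 0 ≤ n < k ≤ j ≤ m. -/
/-- **The insertion does not propagate to the k-th edge before time k.**  Suppose the
triangular (GT) array `lam j k n` (level `j`, edge `k`, time `n`, values in ℕ) and the
integers `a j k n` satisfy the Noumi–Yamada description of qRSK applied to `(w n j)`:
empty initial condition, `a j 1 n = w n j`, the boundary rule
`lam j j n = lam j j (n-1) + a j j n`, and for `1 ≤ k < j` the bulk rule
`lam j k n = a j k n + lam j k (n-1) + lam (j-1) k n - lam (j-1) k (n-1) - a j (k+1) n`,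
where `a j (k+1) n` lies in the support of the q-hypergeometric distribution
`qHyp(lam (j-1) k n - lam (j-1) k (n-1), lam (j-1) (k-1) (n-1) - lam (j-1) k n,
lam j k (n-1) - lam (j-1) k (n-1))` (with the convention `lam (j-1) 0 = ∞`, so for `k = 1`
the lower bound is just `0`).  Then `lam j k n = 0` whenever `0 ≤ n < k ≤ j ≤ m`. -/
theorem qrsk_no_propagation (m : ℕ) (hm : 1 ≤ m) (w : ℕ → ℕ → ℕ)
    (lam : ℕ → ℕ → ℕ → ℕ) (a : ℕ → ℕ → ℕ → ℤ)
    (h0 : ∀ j k, 1 ≤ k → k ≤ j → j ≤ m → lam j k 0 = 0)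
    (ha1 : ∀ n j, 1 ≤ n → 1 ≤ j → j ≤ m → a j 1 n = (w n j : ℤ))
    (hdiag : ∀ n j, 1 ≤ n → 1 ≤ j → j ≤ m →
      (lam j j n : ℤ) = (lam j j (n - 1) : ℤ) + a j j n)
    (hrec : ∀ n j k, 1 ≤ n → 1 ≤ k → k < j → j ≤ m →
      (lam j k n : ℤ) = a j k n + (lam j k (n - 1) : ℤ) + (lam (j - 1) k n : ℤ)
        - (lam (j - 1) k (n - 1) : ℤ) - a j (k + 1) n)
    (hbounds : ∀ n j k, 1 ≤ n → 1 ≤ k → k < j → j ≤ m →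
      0 ≤ a j (k + 1) n ∧
      a j (k + 1) n ≤ (lam (j - 1) k n : ℤ) - (lam (j - 1) k (n - 1) : ℤ) ∧
      a j (k + 1) n ≤ (lam j k (n - 1) : ℤ) - (lam (j - 1) k (n - 1) : ℤ) ∧
      (2 ≤ k → (lam j k (n - 1) : ℤ) - (lam (j - 1) k (n - 1) : ℤ)
        - (lam (j - 1) (k - 1) (n - 1) : ℤ) + (lam (j - 1) k n : ℤ) ≤ a j (k + 1) n)) :
    ∀ n k j, n < k → k ≤ j → j ≤ m → lam j k n = 0 := by
  intro n
  induction n with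
  | zero =>
    intro k j h1 h2 h3
    exact h0 j k (by omega) h2 h3
  | succ n ih =>
    intro k j
    induction j with
    | zero => intro h1 h2 h3; omega
    | succ j ihj =>
      intro hnk hkj hjm
      by_cases hk : k = j + 1
      · subst hk
        have hd := hdiag (n + 1) (j + 1) (by omega) (by omega) hjm
        have hb := hbounds (n + 1) (j + 1) j (by omega) (by omega) (by omega) hjm
        simp only [Nat.add_sub_cancel] at hd hb
        have h1 : lam (j + 1) j n = 0 := ih j (j + 1) (by omega) (by omega) hjm
        have h2 : lam j j n = 0 := ih j j (by omega) le_rfl (by omega)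
        have h3 : lam (j + 1) (j + 1) n = 0 :=
          ih (j + 1) (j + 1) (by omega) le_rfl hjm
        obtain ⟨hb1, hb2, hb3, hb4⟩ := hb
        omega
      · have hkj' : k ≤ j := by omega
        have hr := hrec (n + 1) (j + 1) k (by omega) (by omega) (by omega) hjm
        have hbk1 := hbounds (n + 1) (j + 1) k (by omega) (by omega) (by omega) hjm
        have hbk := hbounds (n + 1) (j + 1) (k - 1) (by omega) (by omega) (by omega) hjm
        have hk2 : k - 1 + 1 = k := by omega
        rw [hk2] at hbk
        simp only [Nat.add_sub_cancel] at hr hbk1 hbk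
        have e1 : lam (j + 1) k n = 0 := ih k (j + 1) (by omega) (by omega) hjm
        have e2 : lam j k n = 0 := ih k j (by omega) hkj' (by omega)
        have e3 : lam j k (n + 1) = 0 := ihj hnk hkj' (by omega)
        have e4 : lam (j + 1) (k - 1) n = 0 := ih (k - 1) (j + 1) (by omega) (by omega) hjm
        have e5 : lam j (k - 1) n = 0 := ih (k - 1) j (by omega) (by omega) (by omega)
        obtain ⟨b1, b2, b3, b4⟩ := hbk1
        obtain ⟨c1, c2, c3, c4⟩ := hbk
        omega
end

section
/- (Boundary identity dual to the left-boundary rule.) Under exactly the same hypotheses as the previous deterministic lemma (Noumi–Yamada recursion with empty initial condition λ^j_k(0) = 0 and all a^j_{k+1}(n) lying in the q-hypergeometric support intervals), one has for every n ≥ 1 and every level k with n ≤ k ≤ m: λ^k_n(n) = λ^{k−1}_n(n) + a^k_n(n) if k > n, and λ^n_n(n) = a^n_n(n). -/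
/-- **Boundary identity dual to the left-boundary rule.**  Under the same hypotheses as
the propagation lemma (Noumi–Yamada recursion for qRSK with empty initial condition, with
all `a j (k+1) n` lying in the q-hypergeometric support intervals), one has for every
`n ≥ 1` and every level `k` with `n ≤ k ≤ m`:
`lam k n n = lam (k-1) n n + a k n n` if `k > n`, and `lam n n n = a n n n`. -/
theorem qrsk_upper_boundary (m : ℕ) (hm : 1 ≤ m) (w : ℕ → ℕ → ℕ)
    (lam : ℕ → ℕ → ℕ → ℕ) (a : ℕ → ℕ → ℕ → ℤ)
    (h0 : ∀ j k, 1 ≤ k → k ≤ j → j ≤ m → lam j k 0 = 0)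
    (ha1 : ∀ n j, 1 ≤ n → 1 ≤ j → j ≤ m → a j 1 n = (w n j : ℤ))
    (hdiag : ∀ n j, 1 ≤ n → 1 ≤ j → j ≤ m →
      (lam j j n : ℤ) = (lam j j (n - 1) : ℤ) + a j j n)
    (hrec : ∀ n j k, 1 ≤ n → 1 ≤ k → k < j → j ≤ m →
      (lam j k n : ℤ) = a j k n + (lam j k (n - 1) : ℤ) + (lam (j - 1) k n : ℤ)
        - (lam (j - 1) k (n - 1) : ℤ) - a j (k + 1) n)
    (hbounds : ∀ n j k, 1 ≤ n → 1 ≤ k → k < j → j ≤ m →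
      0 ≤ a j (k + 1) n ∧
      a j (k + 1) n ≤ (lam (j - 1) k n : ℤ) - (lam (j - 1) k (n - 1) : ℤ) ∧
      a j (k + 1) n ≤ (lam j k (n - 1) : ℤ) - (lam (j - 1) k (n - 1) : ℤ) ∧
      (2 ≤ k → (lam j k (n - 1) : ℤ) - (lam (j - 1) k (n - 1) : ℤ)
        - (lam (j - 1) (k - 1) (n - 1) : ℤ) + (lam (j - 1) k n : ℤ) ≤ a j (k + 1) n)) :
    ∀ n k, 1 ≤ n → n ≤ k → k ≤ m →
      (n < k → (lam k n n : ℤ) = (lam (k - 1) n n : ℤ) + a k n n) ∧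
      (k = n → (lam n n n : ℤ) = a n n n) := by

  have vanish : ∀ n j k, 1 ≤ k → k ≤ j → j ≤ m → n < k → (lam j k n : ℤ) = 0 := by
    intro n
    induction n with
    | zero =>
      intro j k hk hkj hjm _
      rw [h0 j k hk hkj hjm]; norm_num
    | succ n ih =>
      intro j
      induction j using Nat.strong_induction_on with
      | _ j ihj =>
        intro k hk hkj hjm hnk
        rcases eq_or_lt_of_le hkj with rfl | hlt
        · -- diagonal case (j has been substituted by k)
          have hk2 : 2 ≤ k := by omega
          have hb := hbounds (n+1) k (k-1) (by omega) (by omega) (by omega) hjm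
          have hkk : k - 1 + 1 = k := by omega
          rw [hkk] at hb
          have h1 : (lam k (k-1) ((n+1) - 1) : ℤ) = 0 := by
            simpa using ih k (k-1) (by omega) (by omega) hjm (by omega)
          have h2 : (lam (k-1) (k-1) ((n+1) - 1) : ℤ) = 0 := by
            simpa using ih (k-1) (k-1) (by omega) (by omega) (by omega) (by omega)
          have ha0 : a k k (n+1) = 0 := by
            have := hb.1
            have := hb.2.2.1
            omega
          have hd := hdiag (n+1) k (by omega) (by omega) hjm
          have h3 : (lam k k ((n+1) - 1) : ℤ) = 0 := by
            simpa using ih k k (by omega) le_rfl hjm (by omega)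
          rw [hd, h3, ha0]; ring
        · -- strict case k < j
          have hk2 : 2 ≤ k := by omega
          have hb1 := hbounds (n+1) j (k-1) (by omega) (by omega) (by omega) hjm
          have hkk : k - 1 + 1 = k := by omega
          rw [hkk] at hb1
          have z1 : (lam j (k-1) ((n+1) - 1) : ℤ) = 0 := by
            simpa using ih j (k-1) (by omega) (by omega) hjm (by omega)
          have z2 : (lam (j-1) (k-1) ((n+1) - 1) : ℤ) = 0 := by
            simpa using ih (j-1) (k-1) (by omega) (by omega) (by omega) (by omega)
          have hak : a j k (n+1) = 0 := by
            have := hb1.1; have := hb1.2.2.1; omega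
          have hb2 := hbounds (n+1) j k (by omega) (by omega) hlt hjm
          have z3 : (lam j k ((n+1) - 1) : ℤ) = 0 := by
            simpa using ih j k (by omega) hkj hjm (by omega)
          have z4 : (lam (j-1) k ((n+1) - 1) : ℤ) = 0 := by
            simpa using ih (j-1) k (by omega) (by omega) (by omega) (by omega)
          have hak1 : a j (k+1) (n+1) = 0 := by
            have := hb2.1; have := hb2.2.2.1; omega
          have z5 : (lam (j-1) k (n+1) : ℤ) = 0 :=
            ihj (j-1) (by omega) k (by omega) (by omega) (by omega) (by omega)
          have hr := hrec (n+1) j k (by omega) (by omega) hlt hjm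
          rw [hr, hak, hak1, z3, z4, z5]; ring
  intro n k hn hnk hkm
  constructor
  · intro hlt
    have hr := hrec n k n hn hn hlt hkm
    have z1 : (lam k n (n-1) : ℤ) = 0 :=
      vanish (n-1) k n hn hnk hkm (by omega)
    have z2 : (lam (k-1) n (n-1) : ℤ) = 0 :=
      vanish (n-1) (k-1) n hn (by omega) (by omega) (by omega)
    have hb := hbounds n k n hn hn hlt hkm
    have ha0 : a k (n+1) n = 0 := by
      have := hb.1; have := hb.2.2.1
      rw [z1, z2] at *; omega
    rw [hr, z1, z2, ha0]; ring
  · intro hkn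
    subst hkn
    have hd := hdiag k k hn hn hkm
    have z : (lam k k (k-1) : ℤ) = 0 :=
      vanish (k-1) k k hn le_rfl hkm (by omega)
    rw [hd, z]; ring
end

section
/- For every real y > 0, lim_{ε→0⁺} ε · ∑_{k=1}^{⌊y/ε⌋} log(1 − e^{−εk}) = Li₂(e^{−y}) − π²/6. Equivalently, writing q = e^{−ε} and (n)_q = ∏_{k=1}^{n}(1 − q^k), one has ε·log (⌊ε^{−1}y⌋)_q → Li₂(e^{−y}) − π²/6 as ε → 0⁺. -/
/-
Expanding `log (1 - q^k) = -∑ₙ q^{k(n+1)}/(n+1)` for `q = e^{-ε}` and summing the geometric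
series over `k ≤ N = ⌊y/ε⌋` turns `ε log (N)_q` into `-∑ₙ φ(ε(n+1)) (1 - e^{-ε(n+1)N}) / (n+1)²`,
where `φ(x) = x/(eˣ - 1)`. Since `0 ≤ φ ≤ 1`, `φ(x) → 1` as `x → 0⁺` and `εN → y`, the `n`-th term
is bounded by `1/(n+1)²` and tends to `(e^{-(n+1)y} - 1)/(n+1)²`. Tannery's theorem (dominated
convergence for series) then gives the limit `∑ₙ (e^{-(n+1)y} - 1)/(n+1)² = Li₂(e^{-y}) - ζ(2)`.
-/

/-- The dilogarithm `Li₂(x) = ∑_{n≥1} xⁿ/n²`. -/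
noncomputable def dilog (x : ℝ) : ℝ := ∑' n : ℕ, x ^ (n + 1) / ((n : ℝ) + 1) ^ 2

open Filter Real Topology Finset

lemma sum_Icc_exp_neg_mul {x : ℝ} (hx : x ≠ 0) (N : ℕ) :
    ∑ k ∈ Icc 1 N, exp (-(x * k)) = (1 - exp (-(x * N))) / (exp x - 1) := by
  have hpow (k : ℕ) : exp (-(x * k)) = exp (-x) ^ k := by
    rw [← exp_nat_mul]; ring_nf
  have hr : exp (-x) ≠ 1 := by simpa using hx
  have hE : exp x - 1 ≠ 0 := sub_ne_zero.mpr (by simpa using hx)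
  have hrE : exp (-x) * exp x = 1 := by rw [← exp_add]; simp
  simp only [hpow, ← Ico_add_one_right_eq_Icc]
  rw [geom_sum_Ico hr (Nat.le_add_left 1 N), div_eq_div_iff (sub_ne_zero.mpr hr) hE]
  linear_combination (exp (-x) ^ N - 1) * hrE

lemma div_exp_sub_one_le_one {x : ℝ} (hx : 0 < x) : x / (exp x - 1) ≤ 1 := by
  have := add_one_le_exp x
  rw [div_le_one (by linarith [add_one_lt_exp hx.ne'])]
  linarith

lemma tendsto_div_exp_sub_one : Tendsto (fun x => x / (exp x - 1)) (𝓝[≠] 0) (𝓝 1) := by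
  have h := ((hasDerivAt_exp 0).tendsto_slope_zero).inv₀ (by simp)
  simpa [div_eq_inv_mul] using h

lemma tendsto_mul_natFloor_div {y : ℝ} (hy : 0 ≤ y) :
    Tendsto (fun ε => ε * ⌊y / ε⌋₊) (𝓝[>] 0) (𝓝 y) := by
  convert (tendsto_nat_floor_mul_div_atTop hy).comp tendsto_inv_nhdsGT_zero using 2 with ε
  simp [div_eq_mul_inv, mul_comm]

lemma hasSum_one_div_nat_succ_sq : HasSum (fun n : ℕ => 1 / ((n : ℝ) + 1) ^ 2) (π ^ 2 / 6) := by
  simpa using (hasSum_nat_add_iff' 1).mpr hasSum_zeta_two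

lemma hasSum_dilog {x : ℝ} (hx : |x| ≤ 1) :
    HasSum (fun n : ℕ => x ^ (n + 1) / ((n : ℝ) + 1) ^ 2) (dilog x) := by
  refine (Summable.of_norm_bounded hasSum_one_div_nat_succ_sq.summable fun n => ?_).hasSum
  simp only [norm_div, norm_pow, Real.norm_eq_abs, abs_of_pos (Nat.cast_add_one_pos (α := ℝ) n)]
  gcongr
  exact pow_le_one₀ (abs_nonneg x) hx

lemma hasSum_log_one_sub_exp_neg {t : ℝ} (ht : 0 < t) :
    HasSum (fun n : ℕ => -exp (-(t * (n + 1))) / (n + 1)) (log (1 - exp (-t))) := by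
  have habs : |exp (-t)| < 1 := by
    rw [abs_of_pos (exp_pos _), exp_lt_one_iff]; linarith
  have hterm (n : ℕ) : -exp (-(t * (n + 1))) / (n + 1) = -(exp (-t) ^ (n + 1) / (n + 1)) := by
    rw [← exp_nat_mul, neg_div]
    push_cast
    ring_nf
  simpa only [hterm, neg_neg] using (hasSum_pow_div_log_of_abs_lt_one habs).neg

noncomputable def logQFacTerm (ε : ℝ) (N n : ℕ) : ℝ :=
  -(ε * (n + 1) / (exp (ε * (n + 1)) - 1) * (1 - exp (-(ε * (n + 1) * N)))) / (n + 1) ^ 2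

lemma hasSum_logQFacTerm {ε : ℝ} (hε : 0 < ε) (N : ℕ) :
    HasSum (logQFacTerm ε N) (ε * ∑ k ∈ Icc 1 N, log (1 - exp (-(ε * k)))) := by
  have hlog (k : ℕ) (hk : k ∈ Icc 1 N) :
      HasSum (fun n : ℕ => ε * (-exp (-(ε * k * (n + 1))) / (n + 1)))
        (ε * log (1 - exp (-(ε * k)))) := by
    have : (0 : ℝ) < k := by exact_mod_cast (mem_Icc.mp hk).1
    exact (hasSum_log_one_sub_exp_neg (mul_pos hε this)).mul_left ε
  rw [mul_sum]
  convert hasSum_sum hlog using 1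
  funext n
  have hc : ε * (n + 1) ≠ 0 := by positivity
  rw [logQFacTerm, div_mul_eq_mul_div, mul_div_assoc, ← sum_Icc_exp_neg_mul hc, mul_sum,
    ← sum_neg_distrib, sum_div]
  refine sum_congr rfl fun k _ => ?_
  field_simp

lemma norm_logQFacTerm_le {ε : ℝ} (hε : 0 < ε) (N n : ℕ) :
    ‖logQFacTerm ε N n‖ ≤ 1 / ((n : ℝ) + 1) ^ 2 := by
  have hx : 0 < ε * (n + 1) := by positivity
  have hA₀ : 0 ≤ ε * (n + 1) / (exp (ε * (n + 1)) - 1) :=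
    div_nonneg hx.le (by linarith [add_one_le_exp (ε * (n + 1))])
  have hB₀ : 0 ≤ 1 - exp (-(ε * (n + 1) * N)) := by
    rw [sub_nonneg, exp_le_one_iff, neg_nonpos]; positivity
  have hB₁ : 1 - exp (-(ε * (n + 1) * N)) ≤ 1 := by linarith [exp_pos (-(ε * (n + 1) * N))]
  rw [logQFacTerm, norm_div, norm_neg, norm_of_nonneg (mul_nonneg hA₀ hB₀),
    norm_of_nonneg (by positivity)]
  gcongr
  exact mul_le_one₀ (div_exp_sub_one_le_one hx) hB₀ hB₁

lemma tendsto_logQFacTerm {y : ℝ} (hy : 0 ≤ y) (n : ℕ) :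
    Tendsto (fun ε => logQFacTerm ε ⌊y / ε⌋₊ n) (𝓝[>] 0)
      (𝓝 ((exp (-((n + 1) * y)) - 1) / ((n : ℝ) + 1) ^ 2)) := by
  have hc : (0 : ℝ) < n + 1 := by positivity
  have hscale : Tendsto (fun ε : ℝ => ε * (n + 1)) (𝓝[>] 0) (𝓝[≠] 0) := by
    refine tendsto_nhdsWithin_iff.mpr ⟨?_, ?_⟩
    · simpa using ((continuous_mul_const ((n : ℝ) + 1)).tendsto 0).mono_left nhdsWithin_le_nhds
    · filter_upwards [self_mem_nhdsWithin] with ε hε using (mul_pos hε hc).ne'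
  have hfloor : Tendsto (fun ε : ℝ => ε * (n + 1) * ⌊y / ε⌋₊) (𝓝[>] 0) (𝓝 ((n + 1) * y)) :=
    ((tendsto_mul_natFloor_div hy).const_mul ((n : ℝ) + 1)).congr fun ε => by ring
  have h := ((tendsto_div_exp_sub_one.comp hscale).mul
    ((tendsto_const_nhds (x := (1 : ℝ))).sub hfloor.neg.rexp)).neg.div_const (((n : ℝ) + 1) ^ 2)
  rwa [one_mul, neg_sub] at h

lemma hasSum_exp_neg_nat_succ_mul_sub_one_div_sq {y : ℝ} (hy : 0 ≤ y) :
    HasSum (fun n : ℕ => (exp (-((n + 1) * y)) - 1) / ((n : ℝ) + 1) ^ 2)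
      (dilog (exp (-y)) - π ^ 2 / 6) := by
  have habs : |exp (-y)| ≤ 1 := by
    rw [abs_of_pos (exp_pos _), exp_le_one_iff]; linarith
  have hterm (n : ℕ) : (exp (-((n + 1) * y)) - 1) / ((n : ℝ) + 1) ^ 2
      = exp (-y) ^ (n + 1) / ((n : ℝ) + 1) ^ 2 - 1 / ((n : ℝ) + 1) ^ 2 := by
    rw [← exp_nat_mul, sub_div]
    push_cast
    ring_nf
  simpa only [hterm] using (hasSum_dilog habs).sub hasSum_one_div_nat_succ_sq

/-- **Classical limit of `(⌊ε⁻¹y⌋)_q` for `q = e^{-ε}`.** For every `y > 0`,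
`ε · ∑_{k=1}^{⌊y/ε⌋} log(1 - e^{-εk}) → Li₂(e^{-y}) - π²/6` as `ε → 0⁺`;
equivalently `ε · log (⌊ε⁻¹ y⌋)_q → Li₂(e^{-y}) - π²/6`. -/
theorem qfac_classical_limit (y : ℝ) (hy : 0 < y) :
    Filter.Tendsto
      (fun ε : ℝ =>
        ε * ∑ k ∈ Finset.Icc 1 (Nat.floor (y / ε)), Real.log (1 - Real.exp (-(ε * k))))
      (nhdsWithin 0 (Set.Ioi 0))
      (nhds (dilog (Real.exp (-y)) - Real.pi ^ 2 / 6)) := by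
  have hlim := tendsto_tsum_of_dominated_convergence hasSum_one_div_nat_succ_sq.summable
    (tendsto_logQFacTerm hy.le)
    (eventually_mem_nhdsWithin.mono fun ε hε => norm_logQFacTerm_le hε _)
  rw [(hasSum_exp_neg_nat_succ_mul_sub_one_div_sq hy.le).tsum_eq] at hlim
  refine hlim.congr' ?_
  filter_upwards [self_mem_nhdsWithin] with ε hε using (hasSum_logQFacTerm hε _).tsum_eq
end
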